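/- arXiv:1003.2944 — 4 statements merged into one kernel-verified Lean document; each statement's English description precedes it below -/
import Mathlib

section
/- Let p = (0,0), q = (0,1), and let a, b, c ∈ ℝ² with b in the convex hull of {a, p_c, c}, where p_c = (0, y_c) is the orthogonal projection of c onto the y-axis and p_a = (0, y_a) that of a. If the y-coordinates satisfy y_a ≤ y_b ≤ y_c, then dist(a,b) + dist(b,c) ≤ dist(a,p_c) + dist(p_c,c). -/
section

variable {E : Type*} [SeminormedAddCommGroup E] [NormedSpace ℝ E]

theorem convexOn_dist_add_dist (a c : E) :
    ConvexOn ℝ Set.univ (fun x => dist a x + dist x c) := by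
  have h := (convexOn_dist a convex_univ).add (convexOn_dist c convex_univ)
  simp only [dist_comm _ a] at h
  exact h

/-- A convex function on a triangle is maximized at a vertex; at the vertices `a` and `c`
the path length is `dist a c`, which the triangle inequality bounds by the value at `v`. -/
theorem dist_add_dist_le_of_mem_convexHull {a v c b : E} (hb : b ∈ convexHull ℝ {a, v, c}) :
    dist a b + dist b c ≤ dist a v + dist v c := by
  obtain ⟨y, hy, hle⟩ := (convexOn_dist_add_dist a c).exists_ge_of_mem_convexHull
    (Set.subset_univ _) hb
  rcases hy with h | h | h <;> subst y
  · rw [dist_self, zero_add] at hle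
    exact hle.trans (dist_triangle a v c)
  · exact hle
  · rw [dist_self, add_zero] at hle
    exact hle.trans (dist_triangle a v c)

end

theorem path_through_triangle_le_general
    (a b c p_c : EuclideanSpace ℝ (Fin 2))
    (hb : b ∈ convexHull ℝ {a, p_c, c}) :
    dist a b + dist b c ≤ dist a p_c + dist p_c c :=
  dist_add_dist_le_of_mem_convexHull hb

/-- If `b` lies in the convex hull of `{a, p_c, c}` where `p_c = (0, y_c)` is the projection
of `c` onto the `y`-axis, and the `y`-coordinates satisfy `y_a ≤ y_b ≤ y_c`, then
`dist a b + dist b c ≤ dist a p_c + dist p_c c`. -/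
theorem path_through_triangle_le
    (a b c p q p_a p_c : EuclideanSpace ℝ (Fin 2))
    (hp : p = (!₂[0, 0] : EuclideanSpace ℝ (Fin 2)))
    (hq : q = (!₂[0, 1] : EuclideanSpace ℝ (Fin 2)))
    (hpa : p_a = (!₂[0, a 1] : EuclideanSpace ℝ (Fin 2)))
    (hpc : p_c = (!₂[0, c 1] : EuclideanSpace ℝ (Fin 2)))
    (hb : b ∈ convexHull ℝ {a, p_c, c})
    (hy1 : a 1 ≤ b 1) (hy2 : b 1 ≤ c 1) :
    dist a b + dist b c ≤ dist a p_c + dist p_c c :=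
  path_through_triangle_le_general a b c p_c hb
end

section
/- Let C be a plane convex body in ℝ² and let T be a triangle contained in C with side lengths α, β, γ. Then there exists a triangle T' inscribed in C (all vertices on the boundary of C) with side lengths α' ≥ α, β' ≥ β, γ' ≥ γ in a suitable correspondence of sides. -/
/-!
Each vertex in turn is pushed along a ray to the last point of that ray still in `C`, which lies
on the frontier of `C`. In the plane the direction `d` of the ray can be taken perpendicular to
one of the two sides at that vertex and at a non-obtuse angle to the other, so that neither side
shrinks: `‖a + t • d‖² = ‖a‖² + 2 t ⟪a, d⟫ + t² ‖d‖²` with `t ≥ 0` and `⟪a, d⟫ ≥ 0`. Pushing the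
three vertices one after the other gives the inscribed triangle.
-/

open Set Filter Topology RealInnerProductSpace

theorem IsCompact.exists_add_smul_mem_frontier {E : Type*} [NormedAddCommGroup E]
    [NormedSpace ℝ E] {K : Set E} (hK : IsCompact K) {x d : E} (hx : x ∈ K) (hd : d ≠ 0) :
    ∃ t : ℝ, 0 ≤ t ∧ x + t • d ∈ frontier K := by
  set f : ℝ → E := fun t => x + t • d
  have hf : IsClosedEmbedding f :=
    (Homeomorph.addLeft x).isClosedEmbedding.comp (isClosedEmbedding_smul_left hd)
  obtain ⟨t₀, ⟨ht₀K, ht₀⟩, hmax⟩ :=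
    ((hf.isCompact_preimage hK).inter_right isClosed_Ici).exists_isGreatest
      ⟨0, by simpa [f] using hx, self_mem_Ici⟩
  refine ⟨t₀, ht₀, hK.isClosed.frontier_eq ▸ ⟨ht₀K, fun hint => ?_⟩⟩
  have hnear : ∀ᶠ t in 𝓝[>] t₀, f t ∈ interior K := mem_nhdsWithin_of_mem_nhds
    (hf.continuous.continuousAt.preimage_mem_nhds (isOpen_interior.mem_nhds hint))
  obtain ⟨t, htK, ht⟩ := (hnear.and self_mem_nhdsWithin).exists
  exact (hmax ⟨interior_subset (s := K) htK, ht₀.trans (le_of_lt ht)⟩).not_gt ht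

section InnerProductSpace

variable {E : Type*} [NormedAddCommGroup E] [InnerProductSpace ℝ E]

theorem exists_ne_zero_inner_eq_zero (hE : 2 ≤ Module.finrank ℝ E) (u : E) :
    ∃ w : E, w ≠ 0 ∧ ⟪u, w⟫ = 0 := by
  have : FiniteDimensional ℝ E := Module.finite_of_finrank_pos (by omega)
  have hspan : Module.finrank ℝ (ℝ ∙ u) ≤ 1 := by
    simpa using finrank_span_le_card (R := ℝ) ({u} : Set E)
  have hK : (ℝ ∙ u)ᗮ ≠ ⊥ := by
    intro h
    have := (ℝ ∙ u).finrank_add_finrank_orthogonal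
    rw [h, finrank_bot] at this
    omega
  obtain ⟨w, hw, hw0⟩ := Submodule.exists_mem_ne_zero_of_ne_bot hK
  exact ⟨w, hw0, Submodule.mem_orthogonal_singleton_iff_inner_right.mp hw⟩

theorem exists_ne_zero_inner_eq_zero_inner_nonneg (hE : 2 ≤ Module.finrank ℝ E) (u v : E) :
    ∃ d : E, d ≠ 0 ∧ ⟪u, d⟫ = 0 ∧ 0 ≤ ⟪v, d⟫ := by
  obtain ⟨w, hw0, huw⟩ := exists_ne_zero_inner_eq_zero hE u
  rcases le_total 0 ⟪v, w⟫ with hvw | hvw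
  · exact ⟨w, hw0, huw, hvw⟩
  · exact ⟨-w, neg_ne_zero.mpr hw0, by simp [huw], by simpa using hvw⟩

theorem dist_le_dist_add_smul_of_inner_nonneg {x y d : E} {t : ℝ} (ht : 0 ≤ t)
    (h : 0 ≤ ⟪x - y, d⟫) : dist x y ≤ dist (x + t • d) y := by
  rw [dist_eq_norm, dist_eq_norm, ← sq_le_sq₀ (norm_nonneg _) (norm_nonneg _),
    show x + t • d - y = (x - y) + t • d by abel, norm_add_sq_real, real_inner_smul_right]
  nlinarith [mul_nonneg ht h, sq_nonneg ‖t • d‖]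

theorem IsCompact.exists_mem_frontier_dist_le_dist (hE : 2 ≤ Module.finrank ℝ E) {K : Set E}
    (hK : IsCompact K) {x : E} (hx : x ∈ K) (y z : E) :
    ∃ x' ∈ frontier K, dist x y ≤ dist x' y ∧ dist x z ≤ dist x' z := by
  obtain ⟨d, hd, hyd, hzd⟩ := exists_ne_zero_inner_eq_zero_inner_nonneg hE (x - y) (x - z)
  obtain ⟨t, ht, hfr⟩ := hK.exists_add_smul_mem_frontier hx hd
  exact ⟨x + t • d, hfr, dist_le_dist_add_smul_of_inner_nonneg ht hyd.ge,
    dist_le_dist_add_smul_of_inner_nonneg ht hzd⟩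

end InnerProductSpace

theorem inscribe_triangle_without_decreasing_sides_general
    (C : Set (EuclideanSpace ℝ (Fin 2)))
    (hC₁ : IsCompact C)
    (x y z : EuclideanSpace ℝ (Fin 2)) (hx : x ∈ C) (hy : y ∈ C) (hz : z ∈ C) :
    ∃ x' y' z' : EuclideanSpace ℝ (Fin 2),
      x' ∈ frontier C ∧ y' ∈ frontier C ∧ z' ∈ frontier C ∧
      dist x y ≤ dist x' y' ∧ dist y z ≤ dist y' z' ∧ dist x z ≤ dist x' z' := by
  have hplane : 2 ≤ Module.finrank ℝ (EuclideanSpace ℝ (Fin 2)) := by simp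
  obtain ⟨x', hx'C, hxy, hxz⟩ := hC₁.exists_mem_frontier_dist_le_dist hplane hx y z
  obtain ⟨y', hy'C, hyx, hyz⟩ := hC₁.exists_mem_frontier_dist_le_dist hplane hy x' z
  obtain ⟨z', hz'C, hzx, hzy⟩ := hC₁.exists_mem_frontier_dist_le_dist hplane hz x' y'
  rw [dist_comm y, dist_comm y'] at hyx
  rw [dist_comm z, dist_comm z'] at hzx hzy
  exact ⟨x', y', z', hx'C, hy'C, hz'C, hxy.trans hyx, hyz.trans hzy, hxz.trans hzx⟩

/-- A triangle contained in a plane convex body `C` can be replaced by a triangle inscribed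
in `C` (vertices on the boundary) with corresponding side lengths at least as large. -/
theorem inscribe_triangle_without_decreasing_sides
    (C : Set (EuclideanSpace ℝ (Fin 2)))
    (hC₁ : IsCompact C) (hC₂ : Convex ℝ C) (hC₃ : (interior C).Nonempty)
    (x y z : EuclideanSpace ℝ (Fin 2)) (hx : x ∈ C) (hy : y ∈ C) (hz : z ∈ C) :
    ∃ x' y' z' : EuclideanSpace ℝ (Fin 2),
      x' ∈ frontier C ∧ y' ∈ frontier C ∧ z' ∈ frontier C ∧
      dist x y ≤ dist x' y' ∧ dist y z ≤ dist y' z' ∧ dist x z ≤ dist x' z' :=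
  inscribe_triangle_without_decreasing_sides_general C hC₁ x y z hx hy hz
end

section
/- Let p = (0,0), a = (ω_a, θ_a), c = (ω_c, θ_c), p_a = (0, θ_a) ∈ ℝ² with ω_a, ω_c > 0, θ_a ≥ 0, θ_c − θ_a ≥ θ_c/2 > 0, and ω_c ≥ ω_a/2. Then 5 + dist(a, p_a) + dist(p_a, c) ≤ 5·dist(p, c) + dist(a, p) + dist(a, c) holds whenever it holds at c = w := (ω_a/2, θ_c) and c lies to the right of w (i.e. ω_c ≥ ω_a/2), because the directional derivative in direction (1,0) of the right-hand side minus the left-hand side is nonnegative. -/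
/-!
Only `c = (x, θc)` moves, and up to terms independent of `c` the difference `N - M` is
`F x = 5 √(x² + θc²) + √((x - ωa)² + b²) - √(x² + b²)` with `b = θc - θa`.
Its derivative is `5 cos χ + (x - ωa) / √((x - ωa)² + b²) - cos φ`, where
`cos χ = x / √(x² + θc²)` and `cos φ = x / √(x² + b²)`. As `θc ≤ 2 b`, `cos χ ≥ cos φ / 2`; as
`t ↦ t / √(t² + b²)` is odd and monotone and `x - ωa ≥ -x`, the middle term is at least `-cos φ`.
Hence `F' ≥ cos φ / 2 ≥ 0` on `[ωa / 2, ∞)`, and `F ωc ≥ F (ωa / 2)`.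
-/

open Real Set

lemma EuclideanSpace.dist_toLp_two (x₁ y₁ x₂ y₂ : ℝ) :
    dist (!₂[x₁, y₁] : EuclideanSpace ℝ (Fin 2)) !₂[x₂, y₂] =
      √((x₁ - x₂) ^ 2 + (y₁ - y₂) ^ 2) := by
  simp [EuclideanSpace.dist_eq, Fin.sum_univ_two, Real.dist_eq, sq_abs]

lemma monotone_div_sqrt_sq_add {m : ℝ} (hm : 0 < m) :
    Monotone fun t : ℝ => t / √(t ^ 2 + m) := by
  refine monotone_of_odd_of_monotoneOn_nonneg (fun t => by simp [neg_div]) ?_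
  intro s (hs : 0 ≤ s) t (ht : 0 ≤ t) hst
  rw [div_le_div_iff₀ (by positivity) (by positivity)]
  refine (pow_le_pow_iff_left₀ (by positivity) (by positivity) two_ne_zero).1 ?_
  rw [mul_pow, mul_pow, sq_sqrt (by positivity), sq_sqrt (by positivity)]
  nlinarith [pow_le_pow_left₀ hs hst 2]

lemma hasDerivAt_sqrt_sub_sq_add {k m : ℝ} (hm : 0 < m) (t : ℝ) :
    HasDerivAt (fun t => √((t - k) ^ 2 + m)) ((t - k) / √((t - k) ^ 2 + m)) t := by
  have h := (((hasDerivAt_id' t).sub_const k).fun_pow 2).add_const m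
  convert h.sqrt (by positivity) using 1
  field_simp
  ring

lemma crucial_deriv_nonneg {ωa m n x : ℝ} (hm : 0 < m) (hn : 0 ≤ n) (hnm : n ≤ 4 * m)
    (hx : 0 < x) (hωa : ωa ≤ 2 * x) :
    0 ≤ 5 * (x / √(x ^ 2 + n)) + (x - ωa) / √((x - ωa) ^ 2 + m) - x / √(x ^ 2 + m) := by
  have hr : 0 < √(x ^ 2 + m) := by positivity
  have hχφ : x / (2 * √(x ^ 2 + m)) ≤ x / √(x ^ 2 + n) := by
    refine div_le_div_of_nonneg_left hx.le (by positivity) ?_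
    rw [sqrt_le_iff, mul_pow, sq_sqrt (by positivity)]
    constructor <;> nlinarith
  have ha : -(x / √(x ^ 2 + m)) ≤ (x - ωa) / √((x - ωa) ^ 2 + m) := by
    have := monotone_div_sqrt_sq_add hm (show -x ≤ x - ωa by linarith)
    simpa [neg_div] using this
  have hhalf : x / (2 * √(x ^ 2 + m)) = (x / √(x ^ 2 + m)) / 2 := by ring
  have hφ : 0 ≤ x / √(x ^ 2 + m) := by positivity
  linarith

lemma monotoneOn_five_sqrt_add_sqrt_sub_sqrt {ωa m n : ℝ} (hωa : 0 < ωa) (hm : 0 < m)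
    (hn : 0 < n) (hnm : n ≤ 4 * m) :
    MonotoneOn (fun x => 5 * √(x ^ 2 + n) + √((x - ωa) ^ 2 + m) - √(x ^ 2 + m))
      (Ici (ωa / 2)) := by
  have hderiv (x : ℝ) : HasDerivAt
      (fun x => 5 * √(x ^ 2 + n) + √((x - ωa) ^ 2 + m) - √(x ^ 2 + m))
      (5 * (x / √(x ^ 2 + n)) + (x - ωa) / √((x - ωa) ^ 2 + m) - x / √(x ^ 2 + m)) x := by
    have h₁ := hasDerivAt_sqrt_sub_sq_add (k := 0) hn x
    have h₂ := hasDerivAt_sqrt_sub_sq_add (k := ωa) hm x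
    have h₃ := hasDerivAt_sqrt_sub_sq_add (k := 0) hm x
    simp only [sub_zero] at h₁ h₃
    exact ((h₁.const_mul 5).add h₂).sub h₃
  refine monotoneOn_of_deriv_nonneg (convex_Ici _)
    (fun x _ => (hderiv x).continuousAt.continuousWithinAt)
    (fun x _ => (hderiv x).differentiableAt.differentiableWithinAt) fun x hx => ?_
  rw [interior_Ici, mem_Ioi] at hx
  rw [(hderiv x).deriv]
  exact crucial_deriv_nonneg hm hn.le hnm (by linarith) (by linarith)

theorem crucial_inequality_euclidean_general
    (ωa θa ωc θc : ℝ)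
    (hωa : 0 < ωa)
    (hθc : 0 < θc / 2) (hhalf : θc / 2 ≤ θc - θa) (hw : ωa / 2 ≤ ωc)
    (p a p_a c w : EuclideanSpace ℝ (Fin 2))
    (hp : p = (!₂[0, 0] : EuclideanSpace ℝ (Fin 2)))
    (ha : a = (!₂[ωa, θa] : EuclideanSpace ℝ (Fin 2)))
    (hpa : p_a = (!₂[0, θa] : EuclideanSpace ℝ (Fin 2)))
    (hc : c = (!₂[ωc, θc] : EuclideanSpace ℝ (Fin 2)))
    (hwdef : w = (!₂[ωa / 2, θc] : EuclideanSpace ℝ (Fin 2)))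
    (hbase : 5 + dist a p_a + dist p_a w ≤ 5 * dist p w + dist a p + dist a w) :
    5 + dist a p_a + dist p_a c ≤ 5 * dist p c + dist a p + dist a c := by
  have hmono := monotoneOn_five_sqrt_add_sqrt_sub_sqrt (m := (θc - θa) ^ 2) (n := θc ^ 2) hωa
    (pow_pos (by linarith) 2) (pow_pos (by linarith) 2) (by nlinarith) self_mem_Ici hw hw
  subst hp ha hpa hc hwdef
  simp only [dist_comm _ (!₂[ωc, θc] : EuclideanSpace ℝ (Fin 2)),
    dist_comm _ (!₂[ωa / 2, θc] : EuclideanSpace ℝ (Fin 2)),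
    EuclideanSpace.dist_toLp_two, sub_zero] at hbase ⊢
  linarith

/-- The crucial Euclidean inequality: with `p = (0,0)`, `a = (ω_a, θ_a)`, `p_a = (0, θ_a)`,
`c = (ω_c, θ_c)` and `w = (ω_a/2, θ_c)`, if `ω_a, ω_c > 0`, `θ_a ≥ 0`,
`θ_c - θ_a ≥ θ_c/2 > 0`, `ω_c ≥ ω_a/2`, and the inequality
`5 + dist a p_a + dist p_a w ≤ 5·dist p w + dist a p + dist a w` holds at the base point `w`,
then `5 + dist a p_a + dist p_a c ≤ 5·dist p c + dist a p + dist a c`. -/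
theorem crucial_inequality_euclidean
    (ωa θa ωc θc : ℝ)
    (hωa : 0 < ωa) (hωc : 0 < ωc) (hθa : 0 ≤ θa)
    (hθc : 0 < θc / 2) (hhalf : θc / 2 ≤ θc - θa) (hw : ωa / 2 ≤ ωc)
    (p a p_a c w : EuclideanSpace ℝ (Fin 2))
    (hp : p = (!₂[0, 0] : EuclideanSpace ℝ (Fin 2)))
    (ha : a = (!₂[ωa, θa] : EuclideanSpace ℝ (Fin 2)))
    (hpa : p_a = (!₂[0, θa] : EuclideanSpace ℝ (Fin 2)))
    (hc : c = (!₂[ωc, θc] : EuclideanSpace ℝ (Fin 2)))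
    (hwdef : w = (!₂[ωa / 2, θc] : EuclideanSpace ℝ (Fin 2)))
    (hbase : 5 + dist a p_a + dist p_a w ≤ 5 * dist p w + dist a p + dist a w) :
    5 + dist a p_a + dist p_a c ≤ 5 * dist p c + dist a p + dist a c :=
  crucial_inequality_euclidean_general ωa θa ωc θc hωa hθc hhalf hw p a p_a c w hp ha hpa hc hwdef
    hbase
end

section
/- For all real θ_c, θ_a, ω_c with θ_c > θ_a ≥ θ_c/2·0, θ_c − θ_a ≥ θ_c/2 > 0 and ω_c > 0: (5·cosh(θ_c)·sinh(ω_c))/√(cosh²(θ_c)·cosh²(ω_c) − 1) − (2·cosh(θ_c − θ_a)·sinh(ω_c))/√(cosh²(θ_c − θ_a)·cosh²(ω_c) − 1) ≥ 0. -/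
/-! With `k = cosh ω_c` and `r(x) = x / √(x²k² - 1)`, the expression is
`sinh ω_c · (5 r(cosh θ_c) - 2 r(cosh (θ_c - θ_a)))`. Since `r` is decreasing and
`cosh (θ_c - θ_a) ≥ c := cosh (θ_c / 2)`, it suffices that `2 r(c) ≤ 5 r(2c² - 1)`, as
`2c² - 1 = cosh θ_c`. After squaring, this is a polynomial inequality in `c²` and `k²`,
worst at `k = 1`. -/

open Real

lemma div_sqrt_le_div_sqrt_of_sq_mul_le {a b p q : ℝ} (ha : 0 ≤ a) (hb : 0 ≤ b) (hp : 0 < p)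
    (hq : 0 < q) (h : a ^ 2 * q ≤ b ^ 2 * p) : a / √p ≤ b / √q := by
  rw [div_le_div_iff₀ (sqrt_pos.2 hp) (sqrt_pos.2 hq)]
  refine (pow_le_pow_iff_left₀ (by positivity) (by positivity) two_ne_zero).1 ?_
  rwa [mul_pow, mul_pow, sq_sqrt hq.le, sq_sqrt hp.le]

lemma div_sqrt_sq_mul_sq_sub_one_le {k x y : ℝ} (hx : 0 ≤ x) (hxy : x ≤ y)
    (hxk : 1 < x ^ 2 * k ^ 2) :
    y / √(y ^ 2 * k ^ 2 - 1) ≤ x / √(x ^ 2 * k ^ 2 - 1) := by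
  have hsq : x ^ 2 ≤ y ^ 2 := pow_le_pow_left₀ hx hxy 2
  have hyk : x ^ 2 * k ^ 2 ≤ y ^ 2 * k ^ 2 := by gcongr
  exact div_sqrt_le_div_sqrt_of_sq_mul_le (hx.trans hxy) hx (by linarith) (by linarith)
    (by nlinarith)

lemma four_mul_mul_le_twentyfive_mul_mul {u K : ℝ} (hu : 1 ≤ u) (hK : 1 ≤ K) :
    4 * u * ((2 * u - 1) ^ 2 * K - 1) ≤ 25 * (2 * u - 1) ^ 2 * (u * K - 1) := by
  -- at `K = 1` the difference is `84t³ + 68t² + 9t` with `t = u - 1`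
  have ht : 0 ≤ u - 1 := sub_nonneg.2 hu
  nlinarith [mul_nonneg (mul_nonneg (sub_nonneg.2 hK) (by linarith : (0 : ℝ) ≤ u))
    (sq_nonneg (2 * u - 1)), pow_nonneg ht 3, sq_nonneg (u - 1)]

lemma two_mul_div_sqrt_le_five_mul_div_sqrt {c k : ℝ} (hc : 1 < c) (hk : 1 ≤ k) :
    2 * (c / √(c ^ 2 * k ^ 2 - 1)) ≤
      5 * ((2 * c ^ 2 - 1) / √((2 * c ^ 2 - 1) ^ 2 * k ^ 2 - 1)) := by
  have hc2 : 1 < c ^ 2 := one_lt_pow₀ hc two_ne_zero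
  have hk2 : 1 ≤ k ^ 2 := one_le_pow₀ hk
  have hd : c ≤ 2 * c ^ 2 - 1 := by nlinarith
  have hck : 1 < c ^ 2 * k ^ 2 := by nlinarith
  have hdk : 1 < (2 * c ^ 2 - 1) ^ 2 * k ^ 2 := by nlinarith
  rw [← mul_div_assoc, ← mul_div_assoc]
  refine div_sqrt_le_div_sqrt_of_sq_mul_le (by linarith) (by linarith) (by linarith)
    (by linarith) ?_
  have := four_mul_mul_le_twentyfive_mul_mul hc2.le hk2
  nlinarith

theorem key_derivative_inequality_hyperbolic_general
    (θc θa ωc : ℝ) (hθc : 0 < θc / 2) (hhalf : θc / 2 ≤ θc - θa)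
    (hωc : 0 < ωc) :
    0 ≤ 5 * Real.cosh θc * Real.sinh ωc /
          Real.sqrt (Real.cosh θc ^ 2 * Real.cosh ωc ^ 2 - 1) -
        2 * Real.cosh (θc - θa) * Real.sinh ωc /
          Real.sqrt (Real.cosh (θc - θa) ^ 2 * Real.cosh ωc ^ 2 - 1) := by
  set c := cosh (θc / 2)
  set k := cosh ωc
  have hc : 1 < c := one_lt_cosh.2 hθc.ne'
  have hk : 1 ≤ k := one_le_cosh ωc
  have hθc_double : cosh θc = 2 * c ^ 2 - 1 := by
    have := cosh_two_mul (θc / 2)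
    rw [mul_div_cancel₀ θc two_ne_zero] at this
    linarith [cosh_sq (θc / 2)]
  have hc_le : c ≤ cosh (θc - θa) := by
    rw [cosh_le_cosh, abs_of_pos hθc, abs_of_pos (hθc.trans_le hhalf)]
    exact hhalf
  have h_anti := div_sqrt_sq_mul_sq_sub_one_le (k := k) (by positivity) hc_le
    (by nlinarith [one_le_pow₀ (n := 2) hk])
  have h_double := two_mul_div_sqrt_le_five_mul_div_sqrt hc hk
  rw [← hθc_double] at h_double
  have h_factor : 5 * cosh θc * sinh ωc / √(cosh θc ^ 2 * k ^ 2 - 1) -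
      2 * cosh (θc - θa) * sinh ωc / √(cosh (θc - θa) ^ 2 * k ^ 2 - 1) =
      sinh ωc * (5 * (cosh θc / √(cosh θc ^ 2 * k ^ 2 - 1)) -
        2 * (cosh (θc - θa) / √(cosh (θc - θa) ^ 2 * k ^ 2 - 1))) := by ring
  rw [h_factor]
  exact mul_nonneg (sinh_pos_iff.2 hωc).le (by linarith)

/-- The key derivative inequality in the hyperbolic case: for `θ_a ≥ 0`,
`θ_c - θ_a ≥ θ_c/2 > 0` and `ω_c > 0`,
`5·cosh θ_c·sinh ω_c/√(cosh² θ_c·cosh² ω_c − 1)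
  − 2·cosh(θ_c − θ_a)·sinh ω_c/√(cosh²(θ_c − θ_a)·cosh² ω_c − 1) ≥ 0`. -/
theorem key_derivative_inequality_hyperbolic
    (θc θa ωc : ℝ) (hθa : 0 ≤ θa) (hθc : 0 < θc / 2) (hhalf : θc / 2 ≤ θc - θa)
    (hωc : 0 < ωc) :
    0 ≤ 5 * Real.cosh θc * Real.sinh ωc /
          Real.sqrt (Real.cosh θc ^ 2 * Real.cosh ωc ^ 2 - 1) -
        2 * Real.cosh (θc - θa) * Real.sinh ωc /
          Real.sqrt (Real.cosh (θc - θa) ^ 2 * Real.cosh ωc ^ 2 - 1) :=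
  key_derivative_inequality_hyperbolic_general θc θa ωc hθc hhalf hωc
end
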